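/- arXiv:2005.09281 — 3 statements merged into one kernel-verified Lean document; each statement's English description precedes it below -/
import Mathlib

section
/- Let μ be a weight measure over a finite alphabet Σ with values in a linearly ordered cancellative commutative monoid A. There exists a word w ∈ Σ* with P_μ(w) = ∅ if and only if μ is gapful (i.e. not gapfree). -/
/-!
If `μ` is gapfree, the factor-weight function `f` of a word `w` can be realised letter by letter
as the prefix-weight function of a word `v`. Since `f(i + j) ≤ f(i) f(j)`, a factor `u` of `v` at
position `j` satisfies `f(j) μ(u) = f(j + |u|) ≤ f(j) f(|u|)`, and cancelling `f(j)` shows that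
no factor of `v` outweighs `f`; so `v ∈ P_μ(w)`. Conversely, every prefix normal `v` satisfies
`f_v(i + 1) = f_v(i) μ(v[i])`, so a gap in `f_w` excludes every candidate for `P_μ(w)`.
-/

/-- The weight of a word: the product of the weights of its letters. -/
def weight {α A : Type*} [CommMonoid A] [LinearOrder A] [IsOrderedCancelMonoid A] (μ : α → A) (w : List α) : A :=
  (w.map μ).prod

/-- The factor-weight function: `factorWeight μ w i` is the maximum weight of a
length-`i` factor (contiguous subword) of `w`. -/
def factorWeight {α A : Type*} [CommMonoid A] [LinearOrder A] [IsOrderedCancelMonoid A] (μ : α → A)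
    (w : List α) (i : ℕ) : A :=
  ((List.range (w.length + 1 - i)).map fun j => weight μ ((w.drop j).take i)).foldr max 1

/-- A word is `μ`-prefix normal if its factor-weight function agrees with its
prefix-weight function. -/
def PrefixNormal {α A : Type*} [CommMonoid A] [LinearOrder A] [IsOrderedCancelMonoid A] (μ : α → A)
    (w : List α) : Prop :=
  ∀ i ≤ w.length, factorWeight μ w i = weight μ (w.take i)

/-- A weight measure is gapfree if for every word `w` and every `1 ≤ i ≤ |w|` there is a
letter `a` with `f_{w,μ}(i) = f_{w,μ}(i-1) * μ a`. -/
def Gapfree {α A : Type*} [CommMonoid A] [LinearOrder A] [IsOrderedCancelMonoid A] (μ : α → A) : Prop :=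
  ∀ w : List α, ∀ i, 1 ≤ i → i ≤ w.length →
    ∃ a : α, factorWeight μ w i = factorWeight μ w (i - 1) * μ a

/-- `pnClass μ w` is the set `P_μ(w)` of words that are factor-weight equivalent to `w`
and `μ`-prefix normal. -/
def pnClass {α A : Type*} [CommMonoid A] [LinearOrder A] [IsOrderedCancelMonoid A] (μ : α → A)
    (w : List α) : Set (List α) :=
  {v | (∀ i, factorWeight μ v i = factorWeight μ w i) ∧ PrefixNormal μ v}

lemma List.foldr_max_le_iff {A : Type*} [LinearOrder A] {l : List A} {b c : A} :
    l.foldr max b ≤ c ↔ b ≤ c ∧ ∀ x ∈ l, x ≤ c := by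
  induction l <;> simp_all [and_left_comm]

lemma List.le_foldr_max {A : Type*} [LinearOrder A] (l : List A) (b : A) : b ≤ l.foldr max b := by
  induction l <;> simp_all

section FactorWeight

variable {α A : Type*} [CommMonoid A] [LinearOrder A] [IsOrderedCancelMonoid A] {μ : α → A}

lemma weight_append (u v : List α) : weight μ (u ++ v) = weight μ u * weight μ v := by
  simp [weight]

lemma weight_take_succ {v : List α} {i : ℕ} (hi : i < v.length) :
    weight μ (v.take (i + 1)) = weight μ (v.take i) * μ v[i] := by
  rw [List.take_succ_eq_append_getElem hi, weight_append]
  simp [weight]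

lemma one_lt_weight (hμ : ∀ a : α, 1 < μ a) {u : List α} (hu : u ≠ []) : 1 < weight μ u :=
  List.one_lt_prod_of_one_lt _ (by simpa using fun a _ => hμ a) (by simpa using hu)

lemma one_le_factorWeight (w : List α) (i : ℕ) : 1 ≤ factorWeight μ w i :=
  List.le_foldr_max _ _

lemma weight_factor_le_factorWeight {w : List α} {i j : ℕ} (h : j + i ≤ w.length) :
    weight μ ((w.drop j).take i) ≤ factorWeight μ w i :=
  List.le_max_of_le' 1 (List.mem_map.mpr ⟨j, List.mem_range.mpr (by omega), rfl⟩) le_rfl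

lemma weight_take_le_factorWeight {w : List α} {i : ℕ} (h : i ≤ w.length) :
    weight μ (w.take i) ≤ factorWeight μ w i := by
  simpa using weight_factor_le_factorWeight (μ := μ) (j := 0) (by omega : 0 + i ≤ w.length)

lemma factorWeight_le {w : List α} {i : ℕ} {c : A} (hc : 1 ≤ c)
    (h : ∀ j, j + i ≤ w.length → weight μ ((w.drop j).take i) ≤ c) :
    factorWeight μ w i ≤ c := by
  refine List.foldr_max_le_iff.mpr ⟨hc, ?_⟩
  simp only [List.mem_map, List.mem_range, forall_exists_index, and_imp]
  rintro _ j hj rfl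
  exact h j (by omega)

lemma factorWeight_zero (w : List α) : factorWeight μ w 0 = 1 :=
  (factorWeight_le le_rfl fun _ _ => by simp [weight]).antisymm (one_le_factorWeight w 0)

lemma factorWeight_of_length_lt {w : List α} {i : ℕ} (h : w.length < i) :
    factorWeight μ w i = 1 := by
  simp [factorWeight, Nat.sub_eq_zero_of_le (Nat.succ_le_of_lt h)]

lemma one_lt_factorWeight (hμ : ∀ a : α, 1 < μ a) {w : List α} {i : ℕ}
    (h₀ : i ≠ 0) (hi : i ≤ w.length) : 1 < factorWeight μ w i :=
  (one_lt_weight hμ (by simp [h₀, List.ne_nil_of_length_pos (by omega : 0 < w.length)])).trans_le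
    (weight_take_le_factorWeight hi)

lemma factorWeight_add_le (w : List α) (i j : ℕ) :
    factorWeight μ w (i + j) ≤ factorWeight μ w i * factorWeight μ w j := by
  refine factorWeight_le (one_le_mul (one_le_factorWeight w i) (one_le_factorWeight w j))
    fun k hk => ?_
  rw [List.take_add, weight_append, List.drop_drop]
  exact mul_le_mul' (weight_factor_le_factorWeight (by omega))
    (weight_factor_le_factorWeight (by omega))

lemma PrefixNormal.factorWeight_succ {v : List α} (hv : PrefixNormal μ v) {i : ℕ}
    (hi : i < v.length) : factorWeight μ v (i + 1) = factorWeight μ v i * μ v[i] := by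
  rw [hv (i + 1) hi, hv i hi.le, weight_take_succ hi]

lemma exists_weight_take_eq {f : ℕ → A} (hf : f 0 = 1) {n : ℕ}
    (hstep : ∀ k < n, ∃ a, f (k + 1) = f k * μ a) :
    ∃ v : List α, v.length = n ∧ ∀ k ≤ n, weight μ (v.take k) = f k := by
  induction n with
  | zero => exact ⟨[], rfl, fun k hk => by simp [Nat.le_zero.mp hk, hf, weight]⟩
  | succ n ih =>
    obtain ⟨v, hlen, hv⟩ := ih fun k hk => hstep k (by omega)
    obtain ⟨a, ha⟩ := hstep n n.lt_succ_self
    refine ⟨v ++ [a], by simp [hlen], fun k hk => ?_⟩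
    rcases Nat.lt_or_ge k (n + 1) with hk' | hk'
    · rw [List.take_append_of_le_length (by omega), hv k (by omega)]
    · have hvn : weight μ v = f n := by simpa [List.take_of_length_le hlen.le] using hv n le_rfl
      rw [show k = n + 1 by omega, List.take_of_length_le (by simp [hlen]), weight_append, hvn, ha]
      simp [weight]

lemma factorWeight_eq_of_weight_take_eq {v w : List α} (hlen : v.length = w.length)
    (hv : ∀ k ≤ w.length, weight μ (v.take k) = factorWeight μ w k) (i : ℕ) :
    factorWeight μ v i = factorWeight μ w i := by
  rcases le_or_gt i w.length with hi | hi
  · refine le_antisymm (factorWeight_le (one_le_factorWeight w i) fun j hj => ?_) ?_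
    · apply le_of_mul_le_mul_left' (a := factorWeight μ w j)
      calc factorWeight μ w j * weight μ ((v.drop j).take i)
          = weight μ (v.take (j + i)) := by rw [List.take_add, weight_append, hv j (by omega)]
        _ = factorWeight μ w (j + i) := hv _ (by omega)
        _ ≤ factorWeight μ w j * factorWeight μ w i := factorWeight_add_le w j i
    · exact hv i hi ▸ weight_take_le_factorWeight (hlen ▸ hi)
  · rw [factorWeight_of_length_lt (hlen ▸ hi), factorWeight_of_length_lt hi]

lemma pnClass_nonempty (hg : Gapfree μ) (w : List α) : (pnClass μ w).Nonempty := by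
  obtain ⟨v, hlen, hv⟩ := exists_weight_take_eq (μ := μ) (factorWeight_zero w)
    fun k hk => by simpa using hg w (k + 1) k.succ_pos hk
  have hfv := factorWeight_eq_of_weight_take_eq hlen hv
  exact ⟨v, hfv, fun i hi => (hfv i).trans (hv i (hlen ▸ hi)).symm⟩

lemma pnClass_eq_empty_of_gap (hμ : ∀ a : α, 1 < μ a) {w : List α} {i : ℕ}
    (hi : i < w.length) (hgap : ∀ a, factorWeight μ w (i + 1) ≠ factorWeight μ w i * μ a) :
    pnClass μ w = ∅ := by
  refine Set.eq_empty_of_forall_notMem fun v ⟨hfv, hv⟩ => ?_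
  have hiv : i < v.length := by
    by_contra! h
    have := one_lt_factorWeight hμ i.succ_ne_zero hi
    rw [← hfv, factorWeight_of_length_lt (Nat.lt_succ_of_le h)] at this
    exact this.false
  exact hgap v[i] (by rw [← hfv, ← hfv]; exact hv.factorWeight_succ hiv)

end FactorWeight

theorem exists_empty_pnClass_iff_not_gapfree_general {α A : Type*}
    [CommMonoid A] [LinearOrder A] [IsOrderedCancelMonoid A] (μ : α → A) (hμ : ∀ a : α, 1 < μ a) :
    (∃ w : List α, pnClass μ w = ∅) ↔ ¬ Gapfree μ := by
  refine ⟨fun ⟨w, hw⟩ hg => (pnClass_nonempty hg w).ne_empty hw, fun hg => ?_⟩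
  simp only [Gapfree, not_forall] at hg
  obtain ⟨w, i, h₁, hi, hgap⟩ := hg
  obtain ⟨k, rfl⟩ := Nat.exists_eq_add_of_le' h₁
  exact ⟨w, pnClass_eq_empty_of_gap hμ hi fun a h => hgap ⟨a, by simpa using h⟩⟩

/-- There is a word `w` with `P_μ(w) = ∅` iff `μ` is gapful (not gapfree). -/
theorem exists_empty_pnClass_iff_not_gapfree {α A : Type*} [Fintype α]
    [CommMonoid A] [LinearOrder A] [IsOrderedCancelMonoid A] (μ : α → A) (hμ : ∀ a : α, 1 < μ a) :
    (∃ w : List α, pnClass μ w = ∅) ↔ ¬ Gapfree μ :=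
  exists_empty_pnClass_iff_not_gapfree_general μ hμ
end

section
/- Let Σ = {a_1 < a_2 < … < a_n} with n > 2 be a strictly totally ordered finite alphabet and let μ be an injective, alphabetically ordered weight measure over Σ with values in a linearly ordered cancellative commutative monoid A. If μ has no gap over any word of the form c·a·c·b where a < b < c are letters of Σ, then μ(a_i)·μ(a_{i+x}) = μ(a_{i+y})·μ(a_{i+x−y}) holds for all i, x, y ∈ ℕ with y < x and i + x ≤ n. -/
/-! For consecutive letters `a ⋖ b ⋖ c` the heaviest factors of `cacb` of lengths 2 and 3 are
`cb` and `cac`, so the absence of a gap at length 3 gives `μ a * μ c = μ b * μ x` for some letter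
`x`; strict monotonicity forces `a < x < c`, hence `x = b`. So the weights of the letters form a
geometric progression, `μ a_j * μ a_{j+2} = μ a_{j+1} ^ 2`, and in a cancellative monoid such a
progression satisfies `μ a_p * μ a_{q+k} = μ a_{p+k} * μ a_q`. -/

section FactorWeight

variable {α A : Type*} [CommMonoid A] [LinearOrder A] [IsOrderedCancelMonoid A] {μ : α → A}
  {a b c x : α}

theorem factorWeight_cacb_two (hab : μ a ≤ μ b) (hb : 1 ≤ μ b) (hc : 1 ≤ μ c) :
    factorWeight μ [c, a, c, b] 2 = μ c * μ b := by
  simp only [factorWeight, weight, List.length_cons, List.length_nil, List.range_succ,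
    List.range_zero, List.nil_append, List.cons_append, List.map_cons, List.map_nil, List.drop,
    List.take, List.prod_cons, List.prod_nil, mul_one, List.foldr]
  rw [max_eq_left (one_le_mul hc hb), mul_comm (μ a), max_eq_right (mul_le_mul_right hab _),
    max_eq_right (mul_le_mul_right hab _)]

theorem factorWeight_cacb_three (ha : 1 ≤ μ a) (hc : 1 ≤ μ c) (hbc : μ b ≤ μ c) :
    factorWeight μ [c, a, c, b] 3 = μ c * (μ a * μ c) := by
  simp only [factorWeight, weight, List.length_cons, List.length_nil, List.range_succ,
    List.range_zero, List.nil_append, List.cons_append, List.map_cons, List.map_nil, List.drop,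
    List.take, List.prod_cons, List.prod_nil, mul_one, List.foldr]
  refine max_eq_left (max_le ?_ (one_le_mul hc (one_le_mul ha hc)))
  calc μ a * (μ c * μ b) ≤ μ a * (μ c * μ c) := by gcongr
    _ = μ c * (μ a * μ c) := mul_left_comm _ _ _

theorem mul_eq_mul_of_factorWeight_cacb (ha : 1 ≤ μ a) (hab : μ a ≤ μ b) (hbc : μ b ≤ μ c)
    (h : factorWeight μ [c, a, c, b] 3 = factorWeight μ [c, a, c, b] 2 * μ x) :
    μ a * μ c = μ b * μ x := by
  have hb := ha.trans hab
  rw [factorWeight_cacb_three ha (hb.trans hbc) hbc,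
    factorWeight_cacb_two hab hb (hb.trans hbc), mul_assoc] at h
  exact mul_left_cancel h

theorem mul_eq_mul_self_of_factorWeight_cacb [LinearOrder α] (hμ : StrictMono μ) (ha : 1 ≤ μ a)
    (hab : a ⋖ b) (hbc : b ⋖ c)
    (h : factorWeight μ [c, a, c, b] 3 = factorWeight μ [c, a, c, b] 2 * μ x) :
    μ a * μ c = μ b * μ b := by
  have hmul := mul_eq_mul_of_factorWeight_cacb ha (hμ hab.lt).le (hμ hbc.lt).le h
  have hax : μ a < μ x := lt_of_not_ge fun hxa =>
    (mul_lt_mul_of_le_of_lt hxa (hμ hbc.lt)).ne' (hmul.trans (mul_comm _ _))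
  have hxc : μ x < μ c := lt_of_not_ge fun hcx =>
    (mul_lt_mul_of_lt_of_le (hμ hab.lt) hcx).ne hmul
  rwa [hab.eq_of_between hbc (hμ.lt_iff_lt.1 hax) (hμ.lt_iff_lt.1 hxc)] at hmul

end FactorWeight

section GeometricProgression

variable {M : Type*} [CommMonoid M] [IsRightCancelMul M] {f : ℕ → M} {n : ℕ}

def IsGeometricUpTo (f : ℕ → M) (n : ℕ) : Prop :=
  ∀ j, j + 2 < n → f j * f (j + 2) = f (j + 1) * f (j + 1)

theorem IsGeometricUpTo.mul_succ_eq_succ_mul_of_le (hf : IsGeometricUpTo f n) {p q : ℕ}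
    (hpq : p ≤ q) (hq : q + 1 < n) : f p * f (q + 1) = f (p + 1) * f q := by
  induction q, hpq using Nat.le_induction with
  | base => exact mul_comm _ _
  | succ q _ ih =>
    refine mul_right_cancel (b := f q) ?_
    calc f p * f (q + 1 + 1) * f q = f p * (f q * f (q + 2)) := by ac_rfl
      _ = f p * f (q + 1) * f (q + 1) := by rw [hf q hq, mul_assoc]
      _ = f (p + 1) * f (q + 1) * f q := by rw [ih (by omega), mul_right_comm]

theorem IsGeometricUpTo.mul_succ_eq_succ_mul (hf : IsGeometricUpTo f n) {p q : ℕ}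
    (hp : p + 1 < n) (hq : q + 1 < n) : f p * f (q + 1) = f (p + 1) * f q := by
  rcases le_total p q with hpq | hqp
  · exact hf.mul_succ_eq_succ_mul_of_le hpq hq
  · rw [mul_comm, ← hf.mul_succ_eq_succ_mul_of_le hqp hp, mul_comm]

theorem IsGeometricUpTo.mul_add_eq_add_mul (hf : IsGeometricUpTo f n) {p q k : ℕ}
    (hp : p + k < n) (hq : q + k < n) : f p * f (q + k) = f (p + k) * f q := by
  induction k generalizing p with
  | zero => rfl
  | succ k ih =>
    rw [← add_assoc, hf.mul_succ_eq_succ_mul (by omega) (by omega),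
      ih (by omega) (by omega), add_right_comm, add_assoc]

end GeometricProgression

/-- If an injective, alphabetically ordered weight measure over a strictly totally
ordered alphabet `{a_1 < … < a_n}` (modelled as `Fin n`, 0-indexed) with `n > 2` has no
gap over any word of the form `c·a·c·b` with `a < b < c`, then
`μ(a_i) * μ(a_{i+x}) = μ(a_{i+y}) * μ(a_{i+x-y})` for all `y < x` with `i + x ≤ n`. -/
theorem mul_eq_of_no_gap_cacb {n : ℕ} {A : Type*}
    [CommMonoid A] [LinearOrder A] [IsOrderedCancelMonoid A] (μ : Fin n → A) (hμ : ∀ a, 1 < μ a)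
    (hinj : Function.Injective μ) (hmono : Monotone μ)
    (hnogap : ∀ a b c : Fin n, a < b → b < c →
      ∀ i, 1 ≤ i → i ≤ 4 →
        ∃ x : Fin n, factorWeight μ [c, a, c, b] i
          = factorWeight μ [c, a, c, b] (i - 1) * μ x) :
    ∀ (i x y : ℕ), ∀ (hyx : y < x) (h : i + x < n),
      μ ⟨i, by omega⟩ * μ ⟨i + x, h⟩ = μ ⟨i + y, by omega⟩ * μ ⟨i + x - y, by omega⟩ := by
  let f : ℕ → A := fun k => if hk : k < n then μ ⟨k, hk⟩ else 1
  have hf : ∀ k (hk : k < n), f k = μ ⟨k, hk⟩ := fun k hk => dif_pos hk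
  have hcov : ∀ k (hk : k + 1 < n), (⟨k, by omega⟩ : Fin n) ⋖ ⟨k + 1, hk⟩ := fun k _ =>
    Fin.covBy_iff.2 (Nat.covBy_iff_add_one_eq.2 rfl)
  have hgeom : IsGeometricUpTo f n := by
    intro j hj
    obtain ⟨x, hx⟩ := hnogap _ _ _ (hcov j (by omega)).lt (hcov (j + 1) hj).lt 3 (by norm_num)
      (by norm_num)
    rw [hf j (by omega), hf (j + 1) (by omega), hf (j + 2) hj]
    exact mul_eq_mul_self_of_factorWeight_cacb (hmono.strictMono_of_injective hinj)
      (hμ _).le (hcov j (by omega)) (hcov (j + 1) hj) hx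
  intro i x y hyx h
  have key := hgeom.mul_add_eq_add_mul (p := i) (q := i + x - y) (k := y) (by omega) (by omega)
  rwa [Nat.sub_add_cancel (by omega), hf i (by omega), hf (i + x) h, hf (i + y) (by omega),
    hf (i + x - y) (by omega)] at key
end

section
/- Every non-binary prime weight measure is gapful: if μ is a weight measure over a finite alphabet Σ with values in (ℕ,·) such that every base weight μ(a) is a prime number and |μ(Σ)| > 2, then μ is not gapfree. -/
/-!
Pick letters `a`, `b`, `c` with prime weights `p < q < r`. In the word `bcac` the heaviest factor
of length 2 is `bc` (weight `qr`) and the heaviest of length 3 is `cac` (weight `pr²`). Gapfreeness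
would make `qr` divide `pr²`, which is impossible since `q` is a prime different from `p` and `r`.
-/

theorem Finset.exists_lt_lt_of_two_lt_card_image {ι β : Type*} [LinearOrder β] [DecidableEq β]
    {s : Finset ι} {f : ι → β} (h : 2 < (s.image f).card) :
    ∃ a ∈ s, ∃ b ∈ s, ∃ c ∈ s, f a < f b ∧ f b < f c := by
  set e := (s.image f).orderEmbOfFin rfl
  have he (i : Fin (s.image f).card) : ∃ a ∈ s, f a = e i :=
    mem_image.mp (orderEmbOfFin_mem _ rfl i)
  obtain ⟨a, ha, hea⟩ := he ⟨0, by omega⟩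
  obtain ⟨b, hb, heb⟩ := he ⟨1, by omega⟩
  obtain ⟨c, hc, hec⟩ := he ⟨2, by omega⟩
  refine ⟨a, ha, b, hb, c, hc, ?_, ?_⟩ <;> simp [hea, heb, hec, Fin.lt_def]

section FactorWeight

variable {α A : Type*} [CommMonoid A] [LinearOrder A] [IsOrderedCancelMonoid A] {μ : α → A}
  {a b c : α}

theorem factorWeight_bcac_two (hμ : ∀ x, 1 ≤ μ x) (hab : μ a < μ b) :
    factorWeight μ [b, c, a, c] 2 = μ b * μ c := by
  have hca : μ c * μ a < μ b * μ c := by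
    rw [mul_comm (μ b)]; exact mul_lt_mul_right hab _
  simp [factorWeight, weight, List.range_succ, mul_comm (μ a), hca.le, one_le_mul (hμ b) (hμ c)]

theorem factorWeight_bcac_three (hμ : ∀ x, 1 ≤ μ x) (hbc : μ b < μ c) :
    factorWeight μ [b, c, a, c] 3 = μ c * (μ a * μ c) := by
  have hbca : μ b * (μ c * μ a) < μ c * (μ a * μ c) := by
    rw [mul_comm (μ c) (μ a)]; exact mul_lt_mul_left hbc _
  simp [factorWeight, weight, List.range_succ, hbca.le,
    one_le_mul (hμ c) (one_le_mul (hμ a) (hμ c))]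

end FactorWeight

theorem Nat.Prime.not_dvd_mul_mul {p q r : ℕ} (hq : q.Prime) (hp : p.Prime) (hr : r.Prime)
    (hqp : q ≠ p) (hqr : q ≠ r) : ¬ q ∣ r * (p * r) := by
  have hcr : q.Coprime r := (Nat.coprime_primes hq hr).mpr hqr
  have hcp : q.Coprime p := (Nat.coprime_primes hq hp).mpr hqp
  exact (hq.coprime_iff_not_dvd).mp (hcr.mul_right (hcp.mul_right hcr))

theorem not_gapfree_of_prime_of_lt_of_lt {α : Type*} {μ : α → ℕ+}
    (hprime : ∀ a, (μ a : ℕ).Prime) {a b c : α} (hab : μ a < μ b) (hbc : μ b < μ c) : ¬ Gapfree μ := by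
  intro hgap
  obtain ⟨x, hx⟩ := hgap [b, c, a, c] 3 (by norm_num) (by norm_num)
  rw [factorWeight_bcac_three (fun _ => one_le) hbc, show 3 - 1 = 2 from rfl,
    factorWeight_bcac_two (fun _ => one_le) hab] at hx
  have hdvd : μ b ∣ μ c * (μ a * μ c) := ⟨μ c * μ x, by rw [hx, mul_assoc]⟩
  rw [PNat.dvd_iff, PNat.mul_coe, PNat.mul_coe] at hdvd
  exact (hprime b).not_dvd_mul_mul (hprime a) (hprime c)
    (PNat.coe_injective.ne hab.ne') (PNat.coe_injective.ne hbc.ne) hdvd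

theorem prime_weightMeasure_not_gapfree_general {α : Type*} [Fintype α]
    (μ : α → ℕ+) (hprime : ∀ a : α, (μ a : ℕ).Prime)
    (hnonbin : 2 < (Finset.univ.image μ).card) :
    ¬ Gapfree μ := by
  obtain ⟨a, -, b, -, c, -, hab, hbc⟩ := Finset.exists_lt_lt_of_two_lt_card_image hnonbin
  exact not_gapfree_of_prime_of_lt_of_lt hprime hab hbc

/-- Every non-binary prime weight measure is gapful: if all base weights of
`μ : Σ → ℕ+` are prime and `|μ(Σ)| > 2`, then `μ` is not gapfree. -/
theorem prime_weightMeasure_not_gapfree {α : Type*} [Fintype α] [DecidableEq α]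
    (μ : α → ℕ+) (hprime : ∀ a : α, (μ a : ℕ).Prime)
    (hnonbin : 2 < (Finset.univ.image μ).card) :
    ¬ Gapfree μ :=
  prime_weightMeasure_not_gapfree_general μ hprime hnonbin
end
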